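/- arXiv:math/9809100 — 4 statements merged into one kernel-verified Lean document; each statement's English description precedes it below -/
import Mathlib

section
/- There exists a unique sequence (e_i)_{i≥0} in F satisfying the Read relations. -/
/-- The real Banach space ℓ¹ of absolutely summable real sequences. -/
abbrev L1 : Type := lp (fun _ : ℕ => ℝ) 1

/-- The standard unit vectors of ℓ¹. -/
noncomputable def f (i : ℕ) : L1 := lp.single 1 i 1

/-- The dense subspace `F` of ℓ¹ spanned by the standard unit vectors. -/
noncomputable def F : Submodule ℝ L1 := Submodule.span ℝ (Set.range f)

/-- `v n = n * (a n + b n)`; note `v 0 = 0`. -/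
def v (a b : ℕ → ℕ) (n : ℕ) : ℕ := n * (a n + b n)

/-- The sequence `e` satisfies C. J. Read's relations (0), (A), (B), (C), (D). -/
noncomputable def ReadRelations (a b : ℕ → ℕ) (e : ℕ → L1) : Prop :=
  -- (0)
  e 0 = f 0 ∧
  -- (A)
  (∀ r n i : ℕ, 0 < r → r ≤ n → r * a n ≤ i → i ≤ r * a n + v a b (n - r) →
    f i = (a (n - r) : ℝ) • (e i - e (i - r * a n))) ∧
  -- (B), first case
  (∀ r n i : ℕ, 1 ≤ r → r < n → r * a n + v a b (n - r) < i → i < (r + 1) * a n →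
    f i = ((2 : ℝ) ^ ((((r : ℝ) + 1 / 2) * (a n : ℝ) - (i : ℝ)) / Real.sqrt (a n))) • e i) ∧
  -- (B), second case
  (∀ n i : ℕ, 1 ≤ n → v a b (n - 1) < i → i < a n →
    f i = ((2 : ℝ) ^ (((a n : ℝ) / 2 - (i : ℝ)) / Real.sqrt (a n))) • e i) ∧
  -- (C)
  (∀ r n i : ℕ, 1 ≤ r → r ≤ n → r * (a n + b n) ≤ i → i ≤ n * a n + r * b n →
    f i = e i - (b n : ℝ) • e (i - b n)) ∧
  -- (D)
  (∀ r n i : ℕ, r < n → n * a n + r * b n < i → i < (r + 1) * (a n + b n) →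
    f i = ((2 : ℝ) ^ ((((r : ℝ) + 1 / 2) * (b n : ℝ) - (i : ℝ)) / Real.sqrt (b n))) • e i)

/-!
The index ranges of the clauses (0), (A), (B), (C), (D) tile each block `(v (n - 1), v n]`
in order (this is where the growth conditions enter), so every index `i` carries exactly one
relation, and it has the shape `f i = c i • (e i - d i • e (p i))` with `c i ≠ 0` and
`p i < i` whenever `d i ≠ 0`. Such a triangular system has exactly one solution, obtained by
recursion on `i`, and it lies in `F` because every `f i` does.
-/

section Triangular

variable {K V : Type*} [DivisionRing K] [AddCommGroup V] [Module K V]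
  {g : ℕ → V} {c d : ℕ → K} {p : ℕ → ℕ}

theorem eq_smul_sub_smul_iff {x y z : V} {s t : K} (hs : s ≠ 0) :
    z = s • (x - t • y) ↔ x = s⁻¹ • z + t • y := by
  rw [← inv_smul_eq_iff₀ hs, eq_sub_iff_add_eq, eq_comm]

open Classical in
noncomputable def triangularSolution (g : ℕ → V) (c d : ℕ → K) (p : ℕ → ℕ)
    (hp : ∀ i, d i ≠ 0 → p i < i) (i : ℕ) : V :=
  (c i)⁻¹ • g i + if h : d i = 0 then 0 else d i • triangularSolution g c d p hp (p i)
termination_by i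
decreasing_by exact hp i h

theorem triangularSolution_eq (hp : ∀ i, d i ≠ 0 → p i < i) (i : ℕ) :
    triangularSolution g c d p hp i =
      (c i)⁻¹ • g i + d i • triangularSolution g c d p hp (p i) := by
  rw [triangularSolution]
  split_ifs with hd
  · rw [hd, zero_smul]
  · rfl

theorem triangularSolution_spec (hc : ∀ i, c i ≠ 0) (hp : ∀ i, d i ≠ 0 → p i < i) (i : ℕ) :
    g i = c i • (triangularSolution g c d p hp i - d i • triangularSolution g c d p hp (p i)) :=
  (eq_smul_sub_smul_iff (hc i)).2 (triangularSolution_eq hp i)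

theorem triangularSolution_mem (S : Submodule K V) (hg : ∀ i, g i ∈ S)
    (hp : ∀ i, d i ≠ 0 → p i < i) (i : ℕ) : triangularSolution g c d p hp i ∈ S := by
  induction i using Nat.strong_induction_on with
  | _ i ih =>
    rw [triangularSolution]
    split_ifs with hd
    · exact S.add_mem (S.smul_mem _ (hg i)) S.zero_mem
    · exact S.add_mem (S.smul_mem _ (hg i)) (S.smul_mem _ (ih _ (hp i hd)))

theorem eq_of_triangular (hc : ∀ i, c i ≠ 0) (hp : ∀ i, d i ≠ 0 → p i < i) {e e' : ℕ → V}
    (he : ∀ i, g i = c i • (e i - d i • e (p i)))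
    (he' : ∀ i, g i = c i • (e' i - d i • e' (p i))) : e = e' := by
  funext i
  induction i using Nat.strong_induction_on with
  | _ i ih =>
    rw [(eq_smul_sub_smul_iff (hc i)).1 (he i), (eq_smul_sub_smul_iff (hc i)).1 (he' i)]
    by_cases hd : d i = 0
    · simp only [hd, zero_smul]
    · rw [ih _ (hp i hd)]

theorem existsUnique_triangular (S : Submodule K V) (hg : ∀ i, g i ∈ S) (hc : ∀ i, c i ≠ 0)
    (hp : ∀ i, d i ≠ 0 → p i < i) :
    ∃! e : ℕ → V, (∀ i, e i ∈ S) ∧ ∀ i, g i = c i • (e i - d i • e (p i)) :=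
  ⟨triangularSolution g c d p hp, ⟨triangularSolution_mem S hg hp, triangularSolution_spec hc hp⟩,
    fun _ he => eq_of_triangular hc hp he.2 (triangularSolution_spec hc hp)⟩

end Triangular

theorem Monotone.sInf_setOf_le_eq {u : ℕ → ℕ} (hu : Monotone u) {i n : ℕ}
    (h₁ : u (n - 1) < i) (h₂ : i ≤ u n) : sInf {m | i ≤ u m} = n := by
  refine le_antisymm (Nat.sInf_le h₂) (le_csInf ⟨n, h₂⟩ fun m hm => ?_)
  by_contra! hmn
  have : i ≤ u m := hm
  have := hu (Nat.le_sub_one_of_lt hmn)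
  omega

/-- The clauses of the Read relations; `B₀ n` is the second case of (B). -/
inductive ReadClause
  | zero
  | A (r n : ℕ)
  | B (r n : ℕ)
  | B₀ (n : ℕ)
  | C (r n : ℕ)
  | D (r n : ℕ)

namespace ReadClause

def Contains (a b : ℕ → ℕ) (i : ℕ) : ReadClause → Prop
  | zero => i = 0
  | A r n => 0 < r ∧ r ≤ n ∧ r * a n ≤ i ∧ i ≤ r * a n + v a b (n - r)
  | B r n => 1 ≤ r ∧ r < n ∧ r * a n + v a b (n - r) < i ∧ i < (r + 1) * a n
  | B₀ n => 1 ≤ n ∧ v a b (n - 1) < i ∧ i < a n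
  | C r n => 1 ≤ r ∧ r ≤ n ∧ r * (a n + b n) ≤ i ∧ i ≤ n * a n + r * b n
  | D r n => r < n ∧ n * a n + r * b n < i ∧ i < (r + 1) * (a n + b n)

/-- At index `i` the clause `κ` reads
`f i = κ.scale a b i • (e i - κ.weight b • e (κ.back a b i))`. -/
noncomputable def scale (a b : ℕ → ℕ) (i : ℕ) : ReadClause → ℝ
  | zero => 1
  | A r n => a (n - r)
  | B r n => (2 : ℝ) ^ ((((r : ℝ) + 1 / 2) * (a n : ℝ) - (i : ℝ)) / Real.sqrt (a n))
  | B₀ n => (2 : ℝ) ^ (((a n : ℝ) / 2 - (i : ℝ)) / Real.sqrt (a n))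
  | C _ _ => 1
  | D r n => (2 : ℝ) ^ ((((r : ℝ) + 1 / 2) * (b n : ℝ) - (i : ℝ)) / Real.sqrt (b n))

def weight (b : ℕ → ℕ) : ReadClause → ℝ
  | A _ _ => 1
  | C _ n => b n
  | _ => 0

def back (a b : ℕ → ℕ) (i : ℕ) : ReadClause → ℕ
  | A r n => i - r * a n
  | C _ n => i - b n
  | _ => 0

end ReadClause

open ReadClause

theorem readRelations_iff_forall_contains {a b : ℕ → ℕ} {e : ℕ → L1} :
    ReadRelations a b e ↔ ∀ (κ : ReadClause) (i : ℕ), κ.Contains a b i →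
      f i = κ.scale a b i • (e i - κ.weight b • e (κ.back a b i)) := by
  constructor
  · rintro ⟨h0, hA, hB, hB₀, hC, hD⟩ κ i hκ
    cases κ with
    | zero => cases hκ; simp [scale, weight, h0]
    | A r n => simpa [scale, weight, back] using hA r n i hκ.1 hκ.2.1 hκ.2.2.1 hκ.2.2.2
    | B r n => simpa [scale, weight] using hB r n i hκ.1 hκ.2.1 hκ.2.2.1 hκ.2.2.2
    | B₀ n => simpa [scale, weight] using hB₀ n i hκ.1 hκ.2.1 hκ.2.2
    | C r n => simpa [scale, weight, back] using hC r n i hκ.1 hκ.2.1 hκ.2.2.1 hκ.2.2.2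
    | D r n => simpa [scale, weight] using hD r n i hκ.1 hκ.2.1 hκ.2.2
  · intro h
    refine ⟨?_, fun r n i h₁ h₂ h₃ h₄ => ?_, fun r n i h₁ h₂ h₃ h₄ => ?_, fun n i h₁ h₂ h₃ => ?_,
      fun r n i h₁ h₂ h₃ h₄ => ?_, fun r n i h₁ h₂ h₃ => ?_⟩
    · simpa [scale, weight, eq_comm] using h zero 0 rfl
    · simpa [scale, weight, back] using h (A r n) i ⟨h₁, h₂, h₃, h₄⟩
    · simpa [scale, weight] using h (B r n) i ⟨h₁, h₂, h₃, h₄⟩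
    · simpa [scale, weight] using h (B₀ n) i ⟨h₁, h₂, h₃⟩
    · simpa [scale, weight, back] using h (C r n) i ⟨h₁, h₂, h₃, h₄⟩
    · simpa [scale, weight] using h (D r n) i ⟨h₁, h₂, h₃⟩

noncomputable def block (a b : ℕ → ℕ) (i : ℕ) : ℕ := sInf {n | i ≤ v a b n}

noncomputable def readClause (a b : ℕ → ℕ) (i : ℕ) : ReadClause :=
  let n := block a b i
  if i = 0 then zero
  else if i < a n then B₀ n
  else if i ≤ n * a n then
    if i ≤ i / a n * a n + v a b (n - i / a n) then A (i / a n) n else B (i / a n) n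
  else if 1 ≤ i / (a n + b n) ∧ i ≤ n * a n + i / (a n + b n) * b n then
    C (i / (a n + b n)) n
  else D (i / (a n + b n)) n

theorem v_zero (a b : ℕ → ℕ) : v a b 0 = 0 := zero_mul _

theorem mul_le_v (a b : ℕ → ℕ) (n : ℕ) : n * a n ≤ v a b n :=
  Nat.mul_le_mul_left n (Nat.le_add_right _ _)

theorem a_le_v (a b : ℕ → ℕ) {n : ℕ} (hn : 1 ≤ n) : a n ≤ v a b n :=
  (Nat.le_mul_of_pos_left _ hn).trans (mul_le_v a b n)

structure ReadGrowth (a b : ℕ → ℕ) : Prop where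
  a_zero : a 0 = 1
  v_pred_lt_a_of_one_le : ∀ n, 1 ≤ n → v a b (n - 1) < a n
  mul_a_lt_b : ∀ n, 1 ≤ n → n * a n < b n

namespace ReadGrowth

variable {a b : ℕ → ℕ}

theorem v_pred_lt_a (h : ReadGrowth a b) (n : ℕ) : v a b (n - 1) < a n := by
  rcases Nat.eq_zero_or_pos n with rfl | hn
  · simp [v_zero, h.a_zero]
  · exact h.v_pred_lt_a_of_one_le n hn

theorem a_pos (h : ReadGrowth a b) (n : ℕ) : 0 < a n :=
  (Nat.zero_le _).trans_lt (h.v_pred_lt_a n)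

theorem v_monotone (h : ReadGrowth a b) : Monotone (v a b) :=
  monotone_nat_of_le_succ fun n => by
    simpa using ((h.v_pred_lt_a (n + 1)).trans_le (a_le_v a b (Nat.le_add_left 1 n))).le

theorem v_sub_lt_a (h : ReadGrowth a b) {r n : ℕ} (hr : 1 ≤ r) : v a b (n - r) < a n :=
  (h.v_monotone (Nat.sub_le_sub_left hr n)).trans_lt (h.v_pred_lt_a n)

theorem block_eq (h : ReadGrowth a b) {i n : ℕ} (h₁ : a n ≤ i) (h₂ : i ≤ v a b n) :
    block a b i = n :=
  h.v_monotone.sInf_setOf_le_eq ((h.v_pred_lt_a n).trans_le h₁) h₂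

theorem block_spec (h : ReadGrowth a b) {i : ℕ} (hi : 0 < i) :
    1 ≤ block a b i ∧ v a b (block a b i - 1) < i ∧ i ≤ v a b (block a b i) := by
  have hne : {n | i ≤ v a b n}.Nonempty :=
    ⟨i, Nat.le_mul_of_pos_right i (Nat.add_pos_left (h.a_pos i) _)⟩
  have hmem : i ≤ v a b (block a b i) := Nat.sInf_mem hne
  have hpos : 1 ≤ block a b i := by
    by_contra! h0
    rw [Nat.lt_one_iff.1 h0, v_zero] at hmem
    omega
  have hmin : block a b i - 1 ∉ {n | i ≤ v a b n} :=
    Nat.notMem_of_lt_sInf (by unfold block at hpos ⊢; omega)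
  exact ⟨hpos, not_le.1 hmin, hmem⟩

theorem readClause_eq_A (h : ReadGrowth a b) {r n i : ℕ} (hκ : (A r n).Contains a b i) :
    readClause a b i = A r n := by
  obtain ⟨hr, hrn, hlo, hhi⟩ := hκ
  have hv := h.v_sub_lt_a (n := n) hr
  have han := Nat.le_mul_of_pos_left (a n) hr
  have hsucc := add_one_mul r (a n)
  have hle : i ≤ n * a n := by
    rcases hrn.lt_or_eq with hrn | rfl
    · have : (r + 1) * a n ≤ n * a n := Nat.mul_le_mul_right _ hrn
      omega
    · simpa [v_zero] using hhi
  have hb : block a b i = n := h.block_eq (by omega) (hle.trans (mul_le_v a b n))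
  have hdiv : i / a n = r := Nat.div_eq_of_lt_le hlo (by omega)
  simp only [readClause, hb, hdiv]
  split_ifs <;> first | rfl | omega

theorem readClause_eq_B (h : ReadGrowth a b) {r n i : ℕ} (hκ : (B r n).Contains a b i) :
    readClause a b i = B r n := by
  obtain ⟨hr, hrn, hlo, hhi⟩ := hκ
  have hle : (r + 1) * a n ≤ n * a n := Nat.mul_le_mul_right _ hrn
  have han := Nat.le_mul_of_pos_left (a n) hr
  have hv := mul_le_v a b n
  have hb : block a b i = n := h.block_eq (by omega) (by omega)
  have hdiv : i / a n = r := Nat.div_eq_of_lt_le (by omega) hhi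
  simp only [readClause, hb, hdiv]
  split_ifs <;> first | rfl | omega

theorem readClause_eq_C (h : ReadGrowth a b) {r n i : ℕ} (hκ : (C r n).Contains a b i) :
    readClause a b i = C r n := by
  obtain ⟨hr, hrn, hlo, hhi⟩ := hκ
  have hab := h.mul_a_lt_b n (hr.trans hrn)
  have hsplit : r * (a n + b n) = r * a n + r * b n := mul_add _ _ _
  have hsucc := add_one_mul r (a n + b n)
  have habr := Nat.le_mul_of_pos_left (a n + b n) hr
  have hbr : r * b n ≤ n * b n := Nat.mul_le_mul_right _ hrn
  have hv : v a b n = n * a n + n * b n := mul_add _ _ _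
  have hb : block a b i = n := h.block_eq (by omega) (by omega)
  have hdiv : i / (a n + b n) = r := Nat.div_eq_of_lt_le hlo (by omega)
  simp only [readClause, hb, hdiv]
  split_ifs <;> first | rfl | omega

theorem readClause_eq_D (h : ReadGrowth a b) {r n i : ℕ} (hκ : (D r n).Contains a b i) :
    readClause a b i = D r n := by
  obtain ⟨hrn, hlo, hhi⟩ := hκ
  have hsplit : r * (a n + b n) = r * a n + r * b n := mul_add _ _ _
  have hv : (r + 1) * (a n + b n) ≤ v a b n := Nat.mul_le_mul_right _ hrn
  have han := Nat.le_mul_of_pos_left (a n) (Nat.zero_lt_of_lt hrn)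
  have har : r * a n ≤ n * a n := Nat.mul_le_mul_right _ hrn.le
  have hb : block a b i = n := h.block_eq (by omega) (by omega)
  have hdiv : i / (a n + b n) = r := Nat.div_eq_of_lt_le (by omega) hhi
  simp only [readClause, hb, hdiv]
  split_ifs <;> first | rfl | omega

theorem readClause_eq_of_contains (h : ReadGrowth a b) {κ : ReadClause} {i : ℕ}
    (hκ : κ.Contains a b i) : readClause a b i = κ := by
  cases κ with
  | zero => cases hκ; simp [readClause]
  | B₀ n =>
    obtain ⟨hn, hlo, hhi⟩ := hκ
    have hb : block a b i = n :=
      h.v_monotone.sInf_setOf_le_eq hlo (hhi.le.trans (a_le_v a b hn))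
    simp only [readClause, hb]
    split_ifs <;> first | rfl | omega
  | A r n => exact h.readClause_eq_A hκ
  | B r n => exact h.readClause_eq_B hκ
  | C r n => exact h.readClause_eq_C hκ
  | D r n => exact h.readClause_eq_D hκ

theorem contains_readClause (h : ReadGrowth a b) (i : ℕ) : (readClause a b i).Contains a b i := by
  rcases Nat.eq_zero_or_pos i with rfl | hi
  · simp [readClause, Contains]
  obtain ⟨hn, hlo, hhi⟩ := h.block_spec hi
  simp only [readClause, hi.ne', if_false]
  set n := block a b i
  have ha := h.a_pos n
  have hv : v a b n = n * a n + n * b n := mul_add _ _ _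
  split_ifs with h₁ h₂ h₃ h₄
  · exact ⟨hn, hlo, h₁⟩
  · set r := i / a n
    have hrn : r ≤ n := Nat.div_le_of_le_mul (by rwa [mul_comm])
    exact ⟨Nat.div_pos (not_lt.1 h₁) ha, hrn, Nat.div_mul_le_self i (a n), h₃⟩
  · set r := i / a n
    have hrn : r ≤ n := Nat.div_le_of_le_mul (by rwa [mul_comm])
    have hrn' : r ≠ n := by
      rintro hr
      rw [hr, Nat.sub_self, v_zero] at h₃
      omega
    have hsucc := add_one_mul r (a n)
    have hup : i < r * a n + a n := Nat.lt_div_mul_add ha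
    exact ⟨Nat.div_pos (not_lt.1 h₁) ha, by omega, not_le.1 h₃, by omega⟩
  · set r := i / (a n + b n)
    have hrn : r ≤ n := Nat.div_le_of_le_mul (by rw [mul_comm]; exact hhi)
    exact ⟨h₄.1, hrn, Nat.div_mul_le_self i _, h₄.2⟩
  · set r := i / (a n + b n)
    have hrn : r ≤ n := Nat.div_le_of_le_mul (by rw [mul_comm]; exact hhi)
    have hlow : r * (a n + b n) ≤ i := Nat.div_mul_le_self i _
    have hrn' : r ≠ n := by
      rintro hr
      rw [hr] at hlow h₄
      have hvn : n * (a n + b n) = v a b n := rfl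
      omega
    have hsucc := add_one_mul r (a n + b n)
    have hup : i < r * (a n + b n) + (a n + b n) := Nat.lt_div_mul_add (Nat.add_pos_left ha (b n))
    refine ⟨by omega, ?_, by omega⟩
    rcases Nat.eq_zero_or_pos r with hr | hr
    · rw [hr, zero_mul, add_zero]; omega
    · omega

theorem scale_ne_zero (h : ReadGrowth a b) (κ : ReadClause) (i : ℕ) : κ.scale a b i ≠ 0 := by
  cases κ <;> simp only [scale] <;> first | positivity | exact_mod_cast (h.a_pos _).ne'

theorem back_lt (h : ReadGrowth a b) {κ : ReadClause} {i : ℕ} (hκ : κ.Contains a b i)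
    (hw : κ.weight b ≠ 0) : κ.back a b i < i := by
  cases κ with
  | A r n =>
    obtain ⟨hr, -, hlo, -⟩ := hκ
    have hpos := Nat.mul_pos hr (h.a_pos n)
    show i - r * a n < i
    exact Nat.sub_lt (by omega) hpos
  | C r n =>
    obtain ⟨hr, hrn, hlo, -⟩ := hκ
    have hab := h.mul_a_lt_b n (hr.trans hrn)
    have habr := Nat.le_mul_of_pos_left (a n + b n) hr
    show i - b n < i
    exact Nat.sub_lt (by omega) (by omega)
  | _ => exact absurd rfl hw

theorem readRelations_iff (h : ReadGrowth a b) {e : ℕ → L1} :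
    ReadRelations a b e ↔ ∀ i, f i = (readClause a b i).scale a b i •
      (e i - (readClause a b i).weight b • e ((readClause a b i).back a b i)) := by
  rw [readRelations_iff_forall_contains]
  refine ⟨fun he i => he _ i (h.contains_readClause i), fun he κ i hκ => ?_⟩
  rw [← h.readClause_eq_of_contains hκ]
  exact he i

end ReadGrowth

theorem read_relations_existsUnique_general
(a b : ℕ → ℕ)
    (ha0 : a 0 = 1)
    (hga : ∀ n, 1 ≤ n → v a b (n - 1) < a n)
    (hgb : ∀ n, 1 ≤ n → n * a n < b n) :
    ∃! e : ℕ → L1, (∀ i, e i ∈ F) ∧ ReadRelations a b e := by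
  have h : ReadGrowth a b := ⟨ha0, hga, hgb⟩
  simp_rw [h.readRelations_iff]
  exact existsUnique_triangular F (fun i => Submodule.subset_span ⟨i, rfl⟩)
    (fun i => h.scale_ne_zero _ i) (fun i => h.back_lt (h.contains_readClause i))

/-- There exists a unique sequence `(eᵢ)` in `F` satisfying the Read relations. -/
theorem read_relations_existsUnique
(a b : ℕ → ℕ)
    (ha0 : a 0 = 1)
    (hpos : 0 < a 1)
    (hab : ∀ n, 1 ≤ n → a n < b n)
    (hba : ∀ n, 1 ≤ n → b n < a (n + 1))
    (hga : ∀ n, 1 ≤ n → v a b (n - 1) < a n)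
    (hgb : ∀ n, 1 ≤ n → n * a n < b n) :
    ∃! e : ℕ → L1, (∀ i, e i ∈ F) ∧ ReadRelations a b e :=
  read_relations_existsUnique_general a b ha0 hga hgb
end

section
/- Suppose in addition that all the integers a_n and b_n (n ≥ 1) are even, and let (e_i)_{i≥0} satisfy the Read relations. Let S₂ : F → F be the linear map determined on the standard basis by S₂ f_i = f_i if i is even and S₂ f_i = 0 if i is odd. Then S₂ e_i = e_i for every even i and S₂ e_i = 0 for every odd i. -/
/-!
Each relation expresses `f i` either as a nonzero multiple of `e i`, or as a combination of `e i`
and a single earlier `e (i - k)` with `k = r aₙ` or `k = bₙ`. Inverting it puts `e i` in the span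
of `f i` and that earlier vector, and since `k` is even, `i - k` has the parity of `i`. So by
strong induction every `e i` lies in the eigenspace of `S₂` for the eigenvalue `1` or `0`
according to the parity of `i`, because `f i` does.
-/

open Submodule

section ParityEigenspace

variable {R M : Type*} [CommRing R] [AddCommGroup M] [Module R M]

def parityEigenspace (S : Module.End R M) (i : ℕ) : Submodule R M :=
  S.eigenspace (if Even i then 1 else 0)

theorem mem_parityEigenspace {S : Module.End R M} {i : ℕ} {x : M} :
    x ∈ parityEigenspace S i ↔ S x = if Even i then x else 0 := by
  rw [parityEigenspace, Module.End.mem_eigenspace_iff]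
  split_ifs <;> simp

theorem parityEigenspace_sub (S : Module.End R M) {i k : ℕ} (hk : Even k) (hki : k ≤ i) :
    parityEigenspace S (i - k) = parityEigenspace S i := by
  simp only [parityEigenspace, Nat.even_sub hki, hk, iff_true]

end ParityEigenspace

theorem mem_span_singleton_of_eq_smul {K M : Type*} [Field K] [AddCommGroup M] [Module K M]
    {x y : M} {c : K} (hc : c ≠ 0) (h : x = c • y) : y ∈ K ∙ x := by
  rw [mem_span_singleton]
  exact ⟨c⁻¹, by rw [h, smul_smul, inv_mul_cancel₀ hc, one_smul]⟩

theorem exists_lt_le_succ {g : ℕ → ℕ} (h0 : g 0 = 0) (hg : ∀ n, n ≤ g n) {i : ℕ} (hi : 0 < i) :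
    ∃ n, g n < i ∧ i ≤ g (n + 1) := by
  have hex : ∃ n, i ≤ g n := ⟨i, hg i⟩
  obtain ⟨n, hn⟩ : ∃ n, Nat.find hex = n + 1 :=
    Nat.exists_eq_add_one.mpr (Nat.pos_of_ne_zero fun h => by
      have := Nat.find_spec hex; rw [h, h0] at this; omega)
  refine ⟨n, ?_, hn ▸ Nat.find_spec hex⟩
  exact lt_of_not_ge (Nat.find_min hex (by omega))

namespace ReadRelations

variable {a b : ℕ → ℕ} {e : ℕ → L1}

theorem mem_span_of_le_mul_self (he : ReadRelations a b e) (ha : ∀ n, 0 < a n) {n i : ℕ}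
    (hn : 1 ≤ n) (hlo : v a b (n - 1) < i) (hhi : i ≤ n * a n) (heven : Even (a n)) :
    e i ∈ ℝ ∙ f i ∨ ∃ k, 0 < k ∧ k ≤ i ∧ Even k ∧ e i ∈ span ℝ {f i, e (i - k)} := by
  obtain ⟨-, hA, hB₁, hB₂, -, -⟩ := he
  set r := i / a n
  have hr_le : r * a n ≤ i := Nat.div_mul_le_self i (a n)
  have hr_lt : i < (r + 1) * a n := by rw [add_one_mul]; exact Nat.lt_div_mul_add (ha n)
  have hrn : r ≤ n := Nat.div_le_of_le_mul (by rwa [mul_comm])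
  rcases Nat.eq_zero_or_pos r with hr | hr
  · exact .inl <| mem_span_singleton_of_eq_smul (by positivity)
      (hB₂ n i hn hlo (by simpa [hr] using hr_lt))
  by_cases hA_range : i ≤ r * a n + v a b (n - r)
  · refine .inr ⟨r * a n, Nat.mul_pos hr (ha n), hr_le, heven.mul_left r, ?_⟩
    have hc : (a (n - r) : ℝ) ≠ 0 := by exact_mod_cast (ha _).ne'
    rw [mem_span_pair]
    refine ⟨(a (n - r) : ℝ)⁻¹, 1, ?_⟩
    rw [hA r n i hr hrn hr_le hA_range, smul_smul, inv_mul_cancel₀ hc, one_smul, one_smul,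
      sub_add_cancel]
  · have hrn' : r < n := lt_of_le_of_ne hrn fun h => by simp [h, v] at hA_range; omega
    exact .inl <| mem_span_singleton_of_eq_smul (by positivity)
      (hB₁ r n i hr hrn' (by omega) hr_lt)

theorem mem_span_of_mul_self_lt (he : ReadRelations a b e) {n i : ℕ} (hb : 0 < b n)
    (hlo : n * a n < i) (hhi : i ≤ v a b n) (heven : Even (b n)) :
    e i ∈ ℝ ∙ f i ∨ ∃ k, 0 < k ∧ k ≤ i ∧ Even k ∧ e i ∈ span ℝ {f i, e (i - k)} := by
  obtain ⟨-, -, -, -, hC, hD⟩ := he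
  obtain ⟨r, q, hq, hdiv⟩ : ∃ r q, q < b n ∧ i - n * a n - 1 = r * b n + q :=
    ⟨_, _, Nat.mod_lt _ hb, (Nat.div_add_mod' _ _).symm⟩
  have h₁ : n * a n + r * b n < i := by omega
  have h₂ : i ≤ n * a n + (r + 1) * b n := by rw [add_one_mul]; omega
  have hrn : r < n := by
    have : r * b n < n * b n := by simp only [v, mul_add] at hhi; omega
    exact lt_of_mul_lt_mul_right this (Nat.zero_le _)
  by_cases hD_range : i < (r + 1) * (a n + b n)
  · exact .inl <| mem_span_singleton_of_eq_smul (by positivity) (hD r n i hrn h₁ hD_range)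
  · refine .inr ⟨b n, hb, ?_, heven, ?_⟩
    · have := Nat.le_mul_of_pos_left (a n + b n) (Nat.add_one_pos r); omega
    rw [mem_span_pair]
    exact ⟨1, b n, by rw [hC (r + 1) n i r.succ_pos hrn (by omega) h₂, one_smul, sub_add_cancel]⟩

theorem exists_mem_span (he : ReadRelations a b e) (ha : ∀ n, 0 < a n)
    (hb : ∀ n, 1 ≤ n → 0 < b n) (heven : ∀ n, 1 ≤ n → Even (a n) ∧ Even (b n))
    {i : ℕ} (hi : 0 < i) :
    e i ∈ ℝ ∙ f i ∨ ∃ k, 0 < k ∧ k ≤ i ∧ Even k ∧ e i ∈ span ℝ {f i, e (i - k)} := by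
  have hv : ∀ n, n ≤ v a b n := fun n => Nat.le_mul_of_pos_right n (by have := ha n; omega)
  obtain ⟨n, hlo, hhi⟩ := exists_lt_le_succ (by simp [v]) hv hi
  have hn := heven (n + 1) n.succ_pos
  by_cases hreg : i ≤ (n + 1) * a (n + 1)
  · exact he.mem_span_of_le_mul_self ha n.succ_pos (by simpa using hlo) hreg hn.1
  · exact he.mem_span_of_mul_self_lt (hb _ n.succ_pos) (not_le.mp hreg) hhi hn.2

end ReadRelations

theorem read_relations_even_projection_general
    (a b : ℕ → ℕ)
    (ha0 : a 0 = 1)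
    (hab : ∀ n, 1 ≤ n → a n < b n)
    (hga : ∀ n, 1 ≤ n → v a b (n - 1) < a n)
    (heven : ∀ n, 1 ≤ n → Even (a n) ∧ Even (b n))
    (e : ℕ → L1) (he : ReadRelations a b e)
    (S₂ : L1 →ₗ[ℝ] L1)
    (hS₂ : ∀ i : ℕ, S₂ (f i) = if Even i then f i else 0) :
    ∀ i : ℕ, S₂ (e i) = if Even i then e i else 0 := by
  have ha : ∀ n, 0 < a n
    | 0 => ha0 ▸ one_pos
    | n + 1 => (Nat.zero_le _).trans_lt (hga (n + 1) n.succ_pos)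
  have hf (i : ℕ) : f i ∈ parityEigenspace S₂ i := mem_parityEigenspace.mpr (hS₂ i)
  suffices ∀ i, e i ∈ parityEigenspace S₂ i from fun i => mem_parityEigenspace.mp (this i)
  intro i
  induction i using Nat.strong_induction_on with
  | _ i ih =>
  rcases Nat.eq_zero_or_pos i with rfl | hi
  · exact he.1 ▸ hf 0
  rcases he.exists_mem_span ha (fun n hn => (ha n).trans (hab n hn)) heven hi with
    h | ⟨k, hk, hki, hkeven, h⟩
  · exact (span_singleton_le_iff_mem _ _).mpr (hf i) h
  · obtain ⟨c, d, hcd⟩ := mem_span_pair.mp h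
    rw [← hcd]
    have hprev := parityEigenspace_sub S₂ hkeven hki ▸ ih (i - k) (by omega)
    exact add_mem (smul_mem _ c (hf i)) (smul_mem _ d hprev)

/-- If all `aₙ` and `bₙ` are even and `(eᵢ)` satisfies the Read relations, then the
linear map `S₂` with `S₂ fᵢ = fᵢ` for even `i` and `S₂ fᵢ = 0` for odd `i` satisfies
`S₂ eᵢ = eᵢ` for even `i` and `S₂ eᵢ = 0` for odd `i`. -/
theorem read_relations_even_projection
    (a b : ℕ → ℕ)
    (ha0 : a 0 = 1)
    (hpos : 0 < a 1)
    (hab : ∀ n, 1 ≤ n → a n < b n)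
    (hba : ∀ n, 1 ≤ n → b n < a (n + 1))
    (hga : ∀ n, 1 ≤ n → v a b (n - 1) < a n)
    (hgb : ∀ n, 1 ≤ n → n * a n < b n)
    (heven : ∀ n, 1 ≤ n → Even (a n) ∧ Even (b n))
    (e : ℕ → L1) (heF : ∀ i, e i ∈ F) (he : ReadRelations a b e)
    (S₂ : L1 →ₗ[ℝ] L1)
    (hS₂ : ∀ i : ℕ, S₂ (f i) = if Even i then f i else 0) :
    ∀ i : ℕ, S₂ (e i) = if Even i then e i else 0 :=
  read_relations_even_projection_general a b ha0 hab hga heven e he S₂ hS₂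
end

section
/- Let m ≥ 1 be an integer and suppose in addition that m divides a_n and m divides b_n for every n ≥ 1, and let (e_i)_{i≥0} satisfy the Read relations. Let D : F → F be the linear map determined on the standard basis by D f_i = f_i if m divides i and D f_i = 0 otherwise. Then D e_i = e_i whenever m divides i and D e_i = 0 otherwise. -/
/-!
Each Read relation expresses `e i` either as a nonzero multiple of `f i`, or through `f i` and a
single earlier vector `e j` with `i - j` equal to `r * a n` or `b n`, hence a multiple of `m`;
and every `i > 0` falls under one of the relations, namely the one attached to the least `n`
with `i ≤ v n`. So by strong induction `e i` lies in every subspace that contains `f i` and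
depends only on `i mod m`: here the subspace on which `D` is the identity if `m ∣ i`, and zero
otherwise.
-/

open Submodule

def LowerTriangularMod (R : Type*) {M : Type*} [Semiring R] [AddCommMonoid M] [Module R M]
    (m : ℕ) (g e : ℕ → M) (i : ℕ) : Prop :=
  e i ∈ span R {g i} ∨ ∃ j < i, j ≡ i [MOD m] ∧ e i ∈ span R {g i, e j}

section LowerTriangular

variable {R M : Type*}

variable {m i : ℕ} {g e : ℕ → M}

theorem LowerTriangularMod.of_eq_smul [DivisionRing R] [AddCommGroup M] [Module R M]
    {c : R} (hc : c ≠ 0) (h : g i = c • e i) : LowerTriangularMod R m g e i :=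
  Or.inl <| mem_span_singleton.mpr ⟨c⁻¹, by rw [h, smul_smul, inv_mul_cancel₀ hc, one_smul]⟩

theorem LowerTriangularMod.of_eq_add_smul [Semiring R] [AddCommMonoid M] [Module R M]
    {j : ℕ} (hj : j < i) (hji : j ≡ i [MOD m]) (c d : R) (h : e i = c • g i + d • e j) :
    LowerTriangularMod R m g e i :=
  Or.inr ⟨j, hj, hji, mem_span_pair.mpr ⟨c, d, h.symm⟩⟩

theorem LowerTriangularMod.mem [Semiring R] [AddCommMonoid M] [Module R M]
    {S : ℕ → Submodule R M} (hS : ∀ j i, j ≡ i [MOD m] → S j = S i) (hg : ∀ i, g i ∈ S i)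
    (he : ∀ i, LowerTriangularMod R m g e i) (i : ℕ) : e i ∈ S i := by
  induction i using Nat.strong_induction_on with
  | _ i ih =>
    rcases he i with h | ⟨j, hji, hmod, h⟩
    · exact span_le.mpr (Set.singleton_subset_iff.mpr (hg i)) h
    · refine span_le.mpr (Set.insert_subset_iff.mpr ⟨hg i, ?_⟩) h
      exact Set.singleton_subset_iff.mpr (hS j i hmod ▸ ih j hji)

end LowerTriangular

theorem Nat.exists_pred_lt_le {g : ℕ → ℕ} (hg : g 0 = 0) {i : ℕ} (hi : 0 < i)
    (hex : ∃ n, i ≤ g n) : ∃ n, 0 < n ∧ g (n - 1) < i ∧ i ≤ g n := by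
  classical
  have hpos : 0 < Nat.find hex := Nat.pos_of_ne_zero fun h0 => by
    have := Nat.find_spec hex
    rw [h0, hg] at this
    omega
  exact ⟨Nat.find hex, hpos, not_le.mp (Nat.find_min hex (Nat.sub_lt hpos one_pos)),
    Nat.find_spec hex⟩

namespace ReadRelations

variable {a b : ℕ → ℕ} {e : ℕ → L1} {m n i : ℕ}

theorem lowerTriangularMod_of_le_mul_a (he : ReadRelations a b e) (ha : ∀ n, 0 < a n)
    (hma : m ∣ a n) {r : ℕ} (hr : 1 ≤ r) (hrn : r ≤ n)
    (hri : r * a n ≤ i) (hir : i < (r + 1) * a n) (hin : i ≤ n * a n) :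
    LowerTriangularMod ℝ m f e i := by
  by_cases hiA : i ≤ r * a n + v a b (n - r)
  · have hpos : 0 < r * a n := Nat.mul_pos hr (ha n)
    have hmod : i - r * a n ≡ i [MOD m] :=
      (Nat.modEq_iff_dvd' (Nat.sub_le _ _)).mpr <| by
        rw [Nat.sub_sub_self hri]; exact hma.mul_left r
    have ha' : (a (n - r) : ℝ) ≠ 0 := Nat.cast_ne_zero.mpr (ha _).ne'
    refine .of_eq_add_smul (by omega) hmod (a (n - r) : ℝ)⁻¹ 1 ?_
    rw [he.2.1 r n i hr hrn hri hiA, smul_smul, inv_mul_cancel₀ ha', one_smul, one_smul]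
    abel
  · have hrn' : r < n := by
      refine lt_of_le_of_ne hrn fun hrn' => hiA ?_
      subst hrn'
      simpa [v] using hin
    exact .of_eq_smul (by positivity) (he.2.2.1 r n i hr hrn' (not_le.mp hiA) hir)

theorem lowerTriangularMod_of_mul_a_lt (he : ReadRelations a b e) (hb : 0 < b n)
    (hmb : m ∣ b n) {s : ℕ} (hsn : s ≤ n)
    (hsi : s * (a n + b n) ≤ i) (his : i < (s + 1) * (a n + b n)) (hin : n * a n < i)
    (hiv : i ≤ v a b n) : LowerTriangularMod ℝ m f e i := by
  by_cases hiC : i ≤ n * a n + s * b n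
  · have hs : 1 ≤ s := Nat.pos_of_ne_zero fun hs => by subst hs; omega
    have hbi : b n ≤ i := le_trans (by nlinarith) hsi
    have hmod : i - b n ≡ i [MOD m] :=
      (Nat.modEq_iff_dvd' (Nat.sub_le _ _)).mpr <| by rw [Nat.sub_sub_self hbi]; exact hmb
    refine .of_eq_add_smul (by omega) hmod 1 (b n : ℝ) ?_
    rw [he.2.2.2.2.1 s n i hs hsn hsi hiC, one_smul]
    abel
  · have hsn' : s < n := by
      refine lt_of_le_of_ne hsn fun hsn' => hiC ?_
      subst hsn'
      simpa [v, Nat.mul_add] using hiv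
    exact .of_eq_smul (by positivity) (he.2.2.2.2.2 s n i hsn' (not_le.mp hiC) his)

theorem lowerTriangularMod (he : ReadRelations a b e) (ha : ∀ n, 0 < a n)
    (hb : ∀ n, 1 ≤ n → 0 < b n) (hm : ∀ n, 1 ≤ n → m ∣ a n ∧ m ∣ b n) (i : ℕ) :
    LowerTriangularMod ℝ m f e i := by
  rcases Nat.eq_zero_or_pos i with rfl | hi
  · exact .of_eq_smul one_ne_zero (by rw [he.1, one_smul])
  obtain ⟨n, hn, hvi, hiv⟩ := Nat.exists_pred_lt_le (g := v a b) (zero_mul _) hi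
    ⟨i, Nat.le_mul_of_pos_right i (Nat.add_pos_left (ha i) _)⟩
  rcases lt_or_ge i (a n) with hia | hai
  · exact .of_eq_smul (by positivity) (he.2.2.2.1 n i hn hvi hia)
  rcases le_or_gt i (n * a n) with hin | hni
  · have hri := Nat.div_mul_le_self i (a n)
    have hir := Nat.lt_div_mul_add (a := i) (ha n)
    refine lowerTriangularMod_of_le_mul_a he ha (hm n hn).1 (r := i / a n) ?_ ?_ hri
      (by rwa [add_one_mul]) hin
    · exact (Nat.one_le_div_iff (ha n)).mpr hai
    · exact Nat.le_of_mul_le_mul_right (hri.trans hin) (ha n)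
  · have hab : 0 < a n + b n := Nat.add_pos_left (ha n) _
    have hsi := Nat.div_mul_le_self i (a n + b n)
    have his := Nat.lt_div_mul_add (a := i) hab
    refine lowerTriangularMod_of_mul_a_lt he (hb n hn) (hm n hn).2 (s := i / (a n + b n)) ?_
      hsi (by rwa [add_one_mul]) hni hiv
    exact Nat.le_of_mul_le_mul_right (hsi.trans hiv) hab

end ReadRelations

theorem LinearMap.mem_eqLocus_ite {R M : Type*} [Semiring R] [AddCommMonoid M] [Module R M]
    {p : Prop} [Decidable p] {D : M →ₗ[R] M} {x : M} :
    x ∈ D.eqLocus (if p then LinearMap.id else 0) ↔ D x = if p then x else 0 := by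
  split_ifs <;> simp

theorem read_relations_divisibility_projection_general (m : ℕ)
    (a b : ℕ → ℕ)
    (ha0 : a 0 = 1)
    (hga : ∀ n, 1 ≤ n → v a b (n - 1) < a n)
    (hgb : ∀ n, 1 ≤ n → n * a n < b n)
    (hdvd : ∀ n, 1 ≤ n → m ∣ a n ∧ m ∣ b n)
    (e : ℕ → L1) (he : ReadRelations a b e)
    (D : L1 →ₗ[ℝ] L1)
    (hD : ∀ i : ℕ, D (f i) = if m ∣ i then f i else 0) :
    ∀ i : ℕ, D (e i) = if m ∣ i then e i else 0 := by
  have ha (n : ℕ) : 0 < a n := by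
    rcases Nat.eq_zero_or_pos n with rfl | hn
    · rw [ha0]; exact one_pos
    · exact (Nat.zero_le _).trans_lt (hga n hn)
  have hb (n : ℕ) (hn : 1 ≤ n) : 0 < b n := (Nat.zero_le _).trans_lt (hgb n hn)
  let S (i : ℕ) : Submodule ℝ L1 := D.eqLocus (if m ∣ i then LinearMap.id else 0)
  have hS (j i : ℕ) (h : j ≡ i [MOD m]) : S j = S i := by simp only [S, h.dvd_iff dvd_rfl]
  have hf (i : ℕ) : f i ∈ S i := LinearMap.mem_eqLocus_ite.mpr (hD i)
  exact fun i => LinearMap.mem_eqLocus_ite.mp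
    (LowerTriangularMod.mem hS hf (he.lowerTriangularMod ha hb hdvd) i)

/-- If `m` divides all `aₙ` and `bₙ` and `(eᵢ)` satisfies the Read relations, then the
linear map `D` with `D fᵢ = fᵢ` when `m ∣ i` and `D fᵢ = 0` otherwise satisfies
`D eᵢ = eᵢ` when `m ∣ i` and `D eᵢ = 0` otherwise. -/
theorem read_relations_divisibility_projection (m : ℕ) (hm : 1 ≤ m)
    (a b : ℕ → ℕ)
    (ha0 : a 0 = 1)
    (hpos : 0 < a 1)
    (hab : ∀ n, 1 ≤ n → a n < b n)
    (hba : ∀ n, 1 ≤ n → b n < a (n + 1))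
    (hga : ∀ n, 1 ≤ n → v a b (n - 1) < a n)
    (hgb : ∀ n, 1 ≤ n → n * a n < b n)
    (hdvd : ∀ n, 1 ≤ n → m ∣ a n ∧ m ∣ b n)
    (e : ℕ → L1) (heF : ∀ i, e i ∈ F) (he : ReadRelations a b e)
    (D : L1 →ₗ[ℝ] L1)
    (hD : ∀ i : ℕ, D (f i) = if m ∣ i then f i else 0) :
    ∀ i : ℕ, D (e i) = if m ∣ i then e i else 0 :=
  read_relations_divisibility_projection_general m a b ha0 hga hgb hdvd e he D hD
end

section
/- Suppose in addition that all the integers a_n and b_n (n ≥ 1) are even, and let (e_i)_{i≥0} satisfy the Read relations. Let S₂ : ℓ¹ → ℓ¹ be the continuous linear operator with S₂ f_i = f_i for even i and S₂ f_i = 0 for odd i, and let T : ℓ¹ → ℓ¹ be a continuous linear operator with T e_i = e_{i+1} for all i ≥ 0. Then T² ∘ S₂ = S₂ ∘ T² on all of ℓ¹. -/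
/-!
The relations say that each `fᵢ` is a nonzero multiple of `eᵢ` plus a combination of earlier
`eⱼ` with `j ≡ i (mod 2)` (the shifts `r·aₙ` and `bₙ` are even). Such a triangular change of basis
preserves parity classes, so `S₂` is also the even projection with respect to `(eᵢ)`, and the
`eᵢ` span a dense subspace. Since `T²` maps `eᵢ` to `eᵢ₊₂`, of the same parity, `T²` and `S₂`
agree after composition on every `eᵢ`, hence everywhere.
-/

open Submodule

section LowerTriangular

variable (K : Type*) {M : Type*} [Field K] [AddCommGroup M] [Module K M] (P : ℕ → Prop)

def lowerSpan (e : ℕ → M) (i : ℕ) : Submodule K M :=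
  span K (e '' {j | j < i ∧ (P j ↔ P i)})

def IsTriangularAt (u e : ℕ → M) (i : ℕ) : Prop :=
  ∃ c : K, c ≠ 0 ∧ u i - c • e i ∈ lowerSpan K P e i

variable {K P} {u e : ℕ → M} {i j : ℕ}

lemma smul_mem_lowerSpan (hji : j < i) (hP : P j ↔ P i) (d : K) :
    d • e j ∈ lowerSpan K P e i :=
  smul_mem _ _ (subset_span ⟨j, ⟨hji, hP⟩, rfl⟩)

lemma lowerSpan_le_span_range : lowerSpan K P e i ≤ span K (Set.range e) :=
  span_mono (Set.image_subset_range e _)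

lemma isTriangularAt_of_eq_smul {c : K} (hu : u i ≠ 0) (h : u i = c • e i) :
    IsTriangularAt K P u e i :=
  ⟨c, by rintro rfl; simp_all, by simp [h]⟩

lemma isTriangularAt_of_eq_smul_sub {c : K} (hji : j < i) (hP : P j ↔ P i) (hu : u i ≠ 0)
    (h : u i = c • (e i - e j)) : IsTriangularAt K P u e i :=
  ⟨c, by rintro rfl; simp_all, by
    rw [h, smul_sub, sub_sub_cancel_left]; exact neg_mem (smul_mem_lowerSpan hji hP c)⟩

lemma isTriangularAt_of_eq_sub_smul {d : K} (hji : j < i) (hP : P j ↔ P i)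
    (h : u i = e i - d • e j) : IsTriangularAt K P u e i :=
  ⟨1, one_ne_zero, by
    rw [h, one_smul, sub_sub_cancel_left]; exact neg_mem (smul_mem_lowerSpan hji hP d)⟩

lemma span_range_le_of_isTriangularAt (htri : ∀ i, IsTriangularAt K P u e i) :
    span K (Set.range u) ≤ span K (Set.range e) := by
  rw [span_le]
  rintro _ ⟨i, rfl⟩
  obtain ⟨c, -, hw⟩ := htri i
  rw [← sub_add_cancel (u i) (c • e i)]
  exact add_mem (lowerSpan_le_span_range hw) (smul_mem _ _ (subset_span ⟨i, rfl⟩))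

lemma apply_eq_ite_of_isTriangularAt [DecidablePred P] (S : M →ₗ[K] M)
    (hS : ∀ i, S (u i) = if P i then u i else 0) (htri : ∀ i, IsTriangularAt K P u e i)
    (i : ℕ) : S (e i) = if P i then e i else 0 := by
  induction i using Nat.strong_induction_on with
  | _ i ih =>
  obtain ⟨c, hc, hw⟩ := htri i
  set w := u i - c • e i
  have hSw : S w = if P i then w else 0 := by
    split_ifs with hPi
    · refine LinearMap.eqOn_span (g := LinearMap.id) ?_ hw
      rintro _ ⟨j, ⟨hj, hPj⟩, rfl⟩
      simp [ih j hj, hPj.mpr hPi]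
    · refine span_le.mpr (?_ : _ ⊆ (LinearMap.ker S : Set M)) hw
      rintro _ ⟨j, ⟨hj, hPj⟩, rfl⟩
      simp [ih j hj, hPj, hPi]
  have hSu := hS i
  rw [← sub_add_cancel (u i) (c • e i), map_add, map_smul, hSw] at hSu
  split_ifs at hSu ⊢
  · exact smul_right_injective M hc (add_left_cancel hSu)
  · simpa [hc] using hSu

end LowerTriangular

lemma f_ne_zero (i : ℕ) : f i ≠ 0 := fun h => by
  simpa [f] using congrArg (· i) h

lemma dense_F : Dense (F : Set L1) := fun x => by
  refine mem_closure_of_tendsto (lp.hasSum_single (by norm_num) x).tendsto_sum_nat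
    (.of_forall fun s => sum_mem fun i _ => ?_)
  rw [← mul_one (x i), ← smul_eq_mul, lp.single_smul]
  exact smul_mem _ _ (subset_span ⟨i, rfl⟩)

lemma exists_v_pred_lt_le {a b : ℕ → ℕ} (hga : ∀ n, 1 ≤ n → v a b (n - 1) < a n) {i : ℕ}
    (hi : 1 ≤ i) : ∃ n, 1 ≤ n ∧ v a b (n - 1) < i ∧ i ≤ v a b n := by
  have hex : ∃ n, i ≤ v a b n := ⟨i, Nat.le_mul_of_pos_right i (by have := hga i hi; omega)⟩
  have hfind : Nat.find hex ≠ 0 :=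
    ((Nat.find_pos hex).mpr (by simp only [v, zero_mul]; omega)).ne'
  refine ⟨Nat.find hex, by omega, ?_, Nat.find_spec hex⟩
  simpa using Nat.find_min hex (Nat.sub_one_lt hfind)

namespace ReadRelations

variable {a b : ℕ → ℕ} {e : ℕ → L1} {n i : ℕ}

lemma isTriangularAt_of_lt (he : ReadRelations a b e) (hn : 1 ≤ n) (hlo : v a b (n - 1) < i)
    (hi : i < a n) : IsTriangularAt ℝ Even f e i :=
  isTriangularAt_of_eq_smul (f_ne_zero i) (he.2.2.2.1 n i hn hlo hi)

lemma isTriangularAt_of_le_of_le_mul (he : ReadRelations a b e) (ha : Even (a n))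
    (hapos : 0 < a n) (hlo : a n ≤ i) (hi : i ≤ n * a n) : IsTriangularAt ℝ Even f e i := by
  obtain ⟨-, hA, hB, -, -, -⟩ := he
  obtain ⟨r, hrle, hrlt⟩ : ∃ r, r * a n ≤ i ∧ i < (r + 1) * a n :=
    ⟨i / a n, Nat.div_mul_le_self i (a n), (Nat.div_lt_iff_lt_mul hapos).mp (Nat.lt_succ_self _)⟩
  have hr1 : 1 ≤ r := Nat.pos_of_ne_zero (by rintro rfl; omega)
  have hrn : r ≤ n := Nat.le_of_mul_le_mul_right (hrle.trans hi) hapos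
  rcases le_or_gt i (r * a n + v a b (n - r)) with hiA | hiB
  · have hpar : Even (i - r * a n) ↔ Even i := by simp [Nat.even_sub hrle, ha.mul_left r]
    have hj : i - r * a n < i := by have := Nat.mul_pos hr1 hapos; omega
    exact isTriangularAt_of_eq_smul_sub hj hpar (f_ne_zero i) (hA r n i hr1 hrn hrle hiA)
  · have hrn' : r < n := lt_of_le_of_ne hrn <| by
      rintro rfl
      simp only [v, Nat.sub_self, zero_mul, add_zero] at hiB
      omega
    exact isTriangularAt_of_eq_smul (f_ne_zero i) (hB r n i hr1 hrn' hiB hrlt)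

lemma isTriangularAt_of_mul_lt_of_le_v (he : ReadRelations a b e) (hb : Even (b n))
    (hbpos : 0 < b n) (hlo : n * a n < i) (hi : i ≤ v a b n) : IsTriangularAt ℝ Even f e i := by
  obtain ⟨-, -, -, -, hC, hD⟩ := he
  have hpos : 0 < a n + b n := by omega
  obtain ⟨r, hrle, hrlt⟩ : ∃ r, r * (a n + b n) ≤ i ∧ i < (r + 1) * (a n + b n) :=
    ⟨i / (a n + b n), Nat.div_mul_le_self _ _,
      (Nat.div_lt_iff_lt_mul hpos).mp (Nat.lt_succ_self _)⟩
  have hrn : r ≤ n := Nat.le_of_mul_le_mul_right (hrle.trans hi) hpos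
  by_cases hiC : 1 ≤ r ∧ i ≤ n * a n + r * b n
  · obtain ⟨hr1, hCi⟩ := hiC
    have hbi : b n ≤ i :=
      (Nat.le_add_left _ _).trans ((Nat.le_mul_of_pos_left _ hr1).trans hrle)
    exact isTriangularAt_of_eq_sub_smul (by omega) (by simp [Nat.even_sub hbi, hb])
      (hC r n i hr1 hrn hrle hCi)
  · have hiD : n * a n + r * b n < i := by
      rcases Nat.eq_zero_or_pos r with h0 | h1
      · simpa [h0] using hlo
      · exact lt_of_not_ge fun h => hiC ⟨h1, h⟩
    have hrn' : r < n := lt_of_le_of_ne hrn <| by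
      rintro rfl
      rw [v, mul_add] at hi
      omega
    exact isTriangularAt_of_eq_smul (f_ne_zero i) (hD r n i hrn' hiD hrlt)

lemma isTriangularAt (he : ReadRelations a b e) (hab : ∀ n, 1 ≤ n → a n < b n)
    (hga : ∀ n, 1 ≤ n → v a b (n - 1) < a n) (heven : ∀ n, 1 ≤ n → Even (a n) ∧ Even (b n))
    (i : ℕ) : IsTriangularAt ℝ Even f e i := by
  rcases Nat.eq_zero_or_pos i with rfl | hi
  · exact isTriangularAt_of_eq_smul (f_ne_zero 0) (by rw [he.1, one_smul])
  obtain ⟨n, hn, hlo, hhi⟩ := exists_v_pred_lt_le hga hi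
  obtain ⟨ha, hb⟩ := heven n hn
  rcases lt_or_ge i (a n) with h1 | h1
  · exact he.isTriangularAt_of_lt hn hlo h1
  rcases le_or_gt i (n * a n) with h2 | h2
  · exact he.isTriangularAt_of_le_of_le_mul ha (by have := hga n hn; omega) h1 h2
  · exact he.isTriangularAt_of_mul_lt_of_le_v hb (by have := hab n hn; omega) h2 hhi

end ReadRelations

theorem read_operator_sq_commutes_with_even_projection_general
    (a b : ℕ → ℕ)
    (hab : ∀ n, 1 ≤ n → a n < b n)
    (hga : ∀ n, 1 ≤ n → v a b (n - 1) < a n)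
    (heven : ∀ n, 1 ≤ n → Even (a n) ∧ Even (b n))
    (e : ℕ → L1) (he : ReadRelations a b e)
    (S₂ : L1 →L[ℝ] L1)
    (hS₂ : ∀ i : ℕ, S₂ (f i) = if Even i then f i else 0)
    (T : L1 →L[ℝ] L1)
    (hT : ∀ i : ℕ, T (e i) = e (i + 1)) :
    (T ^ 2).comp S₂ = S₂.comp (T ^ 2) := by
  have htri := he.isTriangularAt hab hga heven
  have hS₂e (i : ℕ) : S₂ (e i) = if Even i then e i else 0 :=
    apply_eq_ite_of_isTriangularAt S₂.toLinearMap hS₂ htri i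
  have hdense : Dense (span ℝ (Set.range e) : Set L1) :=
    dense_F.mono (span_range_le_of_isTriangularAt htri)
  refine ContinuousLinearMap.ext_on hdense ?_
  rintro _ ⟨i, rfl⟩
  have hpar : Even (i + 2) ↔ Even i := by simp [Nat.even_add]
  by_cases hi : Even i <;> simp [hS₂e, hT, hpar, hi]

/-- If all `aₙ` and `bₙ` are even, `(eᵢ)` satisfies the Read relations, `S₂` is the
continuous operator with `S₂ fᵢ = fᵢ` for even `i` and `S₂ fᵢ = 0` for odd `i`, and
`T` is a continuous operator with `T eᵢ = e_{i+1}`, then `T² ∘ S₂ = S₂ ∘ T²`. -/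
theorem read_operator_sq_commutes_with_even_projection
    (a b : ℕ → ℕ)
    (ha0 : a 0 = 1)
    (hpos : 0 < a 1)
    (hab : ∀ n, 1 ≤ n → a n < b n)
    (hba : ∀ n, 1 ≤ n → b n < a (n + 1))
    (hga : ∀ n, 1 ≤ n → v a b (n - 1) < a n)
    (hgb : ∀ n, 1 ≤ n → n * a n < b n)
    (heven : ∀ n, 1 ≤ n → Even (a n) ∧ Even (b n))
    (e : ℕ → L1) (heF : ∀ i, e i ∈ F) (he : ReadRelations a b e)
    (S₂ : L1 →L[ℝ] L1)
    (hS₂ : ∀ i : ℕ, S₂ (f i) = if Even i then f i else 0)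
    (T : L1 →L[ℝ] L1)
    (hT : ∀ i : ℕ, T (e i) = e (i + 1)) :
    (T ^ 2).comp S₂ = S₂.comp (T ^ 2) :=
  read_operator_sq_commutes_with_even_projection_general a b hab hga heven e he S₂ hS₂ T hT
end
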